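/- An ideal I of paths in a directed graph 𝔸 is dense if and only if every infinite path of 𝔸 has some finite initial segment belonging to I. -/
import Mathlib


universe u v

/-- An ideal of paths in a quiver: closed under postcomposition. -/
def IsPathIdeal {V : Type u} [Quiver.{v+1} V] (I : Set (Σ a b : V, Quiver.Path a b)) : Prop :=
  ∀ (u v w : V) (p : Quiver.Path u v) (q : Quiver.Path v w),
    (⟨u, v, p⟩ : Σ a b : V, Quiver.Path a b) ∈ I →
    (⟨u, w, p.comp q⟩ : Σ a b : V, Quiver.Path a b) ∈ I

/-- A set of paths is closed if it is an ideal and contains `p` whenever it contains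
`e p` for every edge `e` composable after `p`. -/
def IsPathClosed {V : Type u} [Quiver.{v+1} V] (C : Set (Σ a b : V, Quiver.Path a b)) : Prop :=
  IsPathIdeal C ∧ ∀ (u v : V) (p : Quiver.Path u v),
    (∀ (w : V) (e : v ⟶ w), (⟨u, w, p.cons e⟩ : Σ a b : V, Quiver.Path a b) ∈ C) →
    (⟨u, v, p⟩ : Σ a b : V, Quiver.Path a b) ∈ C

/-- An ideal of paths is dense if the only closed set containing it is the set of all paths. -/
def IsPathDense {V : Type u} [Quiver.{v+1} V] (I : Set (Σ a b : V, Quiver.Path a b)) : Prop :=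
  ∀ C : Set (Σ a b : V, Quiver.Path a b), IsPathClosed C → I ⊆ C → C = Set.univ

/-- The initial segment `e_{n-1} ⋯ e_0` of an infinite path. -/
def infSeg {V : Type u} [Quiver.{v+1} V] (vtx : ℕ → V) (e : ∀ i : ℕ, vtx i ⟶ vtx (i + 1)) :
    ∀ n : ℕ, Quiver.Path (vtx 0) (vtx n)
  | 0 => Quiver.Path.nil
  | n + 1 => (infSeg vtx e n).cons (e n)

section Helpers

variable {V : Type u} [Quiver.{v+1} V]

lemma sig_len_eq {a b a' b' : V} {p : Quiver.Path a b} {p' : Quiver.Path a' b'}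
    (h : (⟨a, b, p⟩ : Σ a b : V, Quiver.Path a b) = ⟨a', b', p'⟩) : p.length = p'.length := by
  have := congrArg (fun x : (Σ a b : V, Quiver.Path a b) => x.2.2.length) h
  simpa using this

lemma sig_destr {a b a' b' : V} {p : Quiver.Path a b} {p' : Quiver.Path a' b'}
    (h : (⟨a, b, p⟩ : Σ a b : V, Quiver.Path a b) = ⟨a', b', p'⟩) :
    a = a' ∧ b = b' ∧ HEq p p' := by
  obtain ⟨h1, h2⟩ := Sigma.mk.inj_iff.mp h
  subst h1
  obtain ⟨h3, h4⟩ := Sigma.mk.inj_iff.mp (eq_of_heq h2)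
  exact ⟨rfl, h3, h4⟩

lemma sig_mk {a b a' b' : V} {p : Quiver.Path a b} {p' : Quiver.Path a' b'}
    (h1 : a = a') (h2 : b = b') (h3 : HEq p p') :
    (⟨a, b, p⟩ : Σ a b : V, Quiver.Path a b) = ⟨a', b', p'⟩ := by
  subst h1; subst h2; cases h3; rfl

lemma seg_congr (vtx : ℕ → V) (e : ∀ i : ℕ, vtx i ⟶ vtx (i + 1)) {m n : ℕ} (h : m = n) :
    (⟨vtx 0, vtx m, infSeg vtx e m⟩ : Σ a b : V, Quiver.Path a b)
      = ⟨vtx 0, vtx n, infSeg vtx e n⟩ := by subst h; rfl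

lemma seg_cons (vtx : ℕ → V) (e : ∀ i : ℕ, vtx i ⟶ vtx (i + 1))
    {u w x : V} (r : Quiver.Path u w) (f : w ⟶ x) (n : ℕ)
    (h : (⟨u, x, r.cons f⟩ : Σ a b : V, Quiver.Path a b) = ⟨vtx 0, vtx n, infSeg vtx e n⟩) :
    ∃ m, (⟨u, w, r⟩ : Σ a b : V, Quiver.Path a b) = ⟨vtx 0, vtx m, infSeg vtx e m⟩ := by
  cases n with
  | zero => exact absurd (sig_len_eq h) (by simp [infSeg, Quiver.Path.length])
  | succ n =>
    obtain ⟨h1, h2, h3⟩ := sig_destr h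
    subst h1; subst h2
    have h4 : r.cons f = (infSeg vtx e n).cons (e n) := eq_of_heq h3
    have h5 : w = vtx n := Quiver.Path.obj_eq_of_cons_eq_cons h4
    subst h5
    exact ⟨n, sig_mk rfl rfl (Quiver.Path.heq_of_cons_eq_cons h4)⟩

lemma seg_prefix (vtx : ℕ → V) (e : ∀ i : ℕ, vtx i ⟶ vtx (i + 1)) :
    ∀ {u w x : V} (q : Quiver.Path w x) (p : Quiver.Path u w) (n : ℕ),
    (⟨u, x, p.comp q⟩ : Σ a b : V, Quiver.Path a b) = ⟨vtx 0, vtx n, infSeg vtx e n⟩ →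
    ∃ m, (⟨u, w, p⟩ : Σ a b : V, Quiver.Path a b) = ⟨vtx 0, vtx m, infSeg vtx e m⟩ := by
  intro u w x q
  induction q with
  | nil => exact fun p n h => ⟨n, by simpa [Quiver.Path.comp_nil] using h⟩
  | cons q f ih =>
    intro p n h
    rw [Quiver.Path.comp_cons] at h
    obtain ⟨m, hm⟩ := seg_cons vtx e _ f n h
    exact ih p m hm

lemma infSeg_shift (vtx : ℕ → V) (e : ∀ i : ℕ, vtx i ⟶ vtx (i + 1)) (n : ℕ) :
    infSeg vtx e (n + 1) =
      (Quiver.Path.nil.cons (e 0)).comp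
        (infSeg (fun i => vtx (i + 1)) (fun i => e (i + 1)) n) := by
  induction n with
  | zero => simp [infSeg, Quiver.Path.comp_nil]
  | succ n ih =>
    show (infSeg vtx e (n + 1)).cons (e (n + 1)) = _
    rw [ih]
    rfl

lemma extend_lemma : ∀ {u w : V} (p : Quiver.Path u w) (vtx : ℕ → V)
    (e : ∀ i : ℕ, vtx i ⟶ vtx (i + 1)) (hv : vtx 0 = w),
    ∃ (vtx' : ℕ → V) (e' : ∀ i : ℕ, vtx' i ⟶ vtx' (i + 1)),
      (∀ n ≤ p.length, ∃ (b : V) (q : Quiver.Path u b) (r : Quiver.Path b w),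
        p = q.comp r ∧
        (⟨vtx' 0, vtx' n, infSeg vtx' e' n⟩ : Σ a b : V, Quiver.Path a b) = ⟨u, b, q⟩) ∧
      (∀ n : ℕ, ∃ r : Quiver.Path w (vtx n),
        (⟨w, vtx n, r⟩ : Σ a b : V, Quiver.Path a b) = ⟨vtx 0, vtx n, infSeg vtx e n⟩ ∧
        (⟨vtx' 0, vtx' (p.length + n), infSeg vtx' e' (p.length + n)⟩
            : Σ a b : V, Quiver.Path a b)
          = ⟨u, vtx n, p.comp r⟩) := by
  intro u w p
  induction p with
  | nil =>
    intro vtx e hv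
    subst hv
    refine ⟨vtx, e, ?_, ?_⟩
    · intro n hn
      have hn0 : n = 0 := Nat.le_zero.mp hn
      subst hn0
      exact ⟨vtx 0, (Quiver.Path.nil : Quiver.Path (vtx 0) (vtx 0)), (Quiver.Path.nil : Quiver.Path (vtx 0) (vtx 0)), rfl, rfl⟩
    · intro n
      refine ⟨infSeg vtx e n, rfl, ?_⟩
      rw [Quiver.Path.nil_comp]
      exact seg_congr vtx e (by simp [Quiver.Path.length])
  | cons q f ih =>
    rename_i b w
    intro vtx e hv
    subst hv
    let vtx₂ : ℕ → V := fun n => match n with | 0 => b | n + 1 => vtx n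
    let e₂ : ∀ i : ℕ, vtx₂ i ⟶ vtx₂ (i + 1) := fun i => match i with | 0 => f | i + 1 => e i
    obtain ⟨vtx', e', hpre, htail⟩ := ih vtx₂ e₂ rfl
    refine ⟨vtx', e', ?_, ?_⟩
    · intro n hn
      rcases Nat.lt_or_ge n (q.length + 1) with hlt | hge
      · obtain ⟨c, q', r', hq, hs⟩ := hpre n (Nat.lt_succ_iff.mp hlt)
        exact ⟨c, q', r'.cons f, by rw [hq, Quiver.Path.comp_cons], hs⟩
      · have hn' : n = q.length + 1 := le_antisymm hn hge
        subst hn'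
        obtain ⟨r, hr1, hr2⟩ := htail 1
        have hr : r = Quiver.Path.nil.cons f := by
          obtain ⟨-, -, h3⟩ := sig_destr hr1
          exact eq_of_heq h3
        refine ⟨vtx₂ 1, q.cons f, Quiver.Path.nil, (Quiver.Path.comp_nil _).symm, ?_⟩
        rw [hr2, hr]
        exact sig_mk rfl rfl (heq_of_eq rfl)
    · intro n
      obtain ⟨r, hr1, hr2⟩ := htail (n + 1)
      have hshift : infSeg vtx₂ e₂ (n + 1) =
          (Quiver.Path.nil.cons f).comp (infSeg vtx e n) := infSeg_shift vtx₂ e₂ n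
      have hr : r = (Quiver.Path.nil.cons f).comp (infSeg vtx e n) := by
        obtain ⟨-, -, h3⟩ := sig_destr hr1
        exact (eq_of_heq h3).trans hshift
      refine ⟨infSeg vtx e n, rfl, ?_⟩
      have hidx : (q.cons f).length + n = q.length + (n + 1) := by
        simp [Quiver.Path.length]; omega
      rw [seg_congr vtx' e' hidx, hr2, hr, ← Quiver.Path.comp_assoc]
      exact sig_mk rfl rfl (heq_of_eq rfl)

end Helpers

/-- An ideal of paths in a directed graph is dense iff every infinite path has a finite
initial segment belonging to it. -/
theorem stmt_11 {V : Type u} [Quiver.{v+1} V] (I : Set (Σ a b : V, Quiver.Path a b))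
    (hI : IsPathIdeal I) :
    IsPathDense I ↔
      ∀ (vtx : ℕ → V) (e : ∀ i : ℕ, vtx i ⟶ vtx (i + 1)),
        ∃ n : ℕ, (⟨vtx 0, vtx n, infSeg vtx e n⟩ : Σ a b : V, Quiver.Path a b) ∈ I := by
  constructor
  · intro hD vtx e
    by_contra hc
    push_neg at hc
    set S : Set (Σ a b : V, Quiver.Path a b) :=
      Set.range (fun n => (⟨vtx 0, vtx n, infSeg vtx e n⟩ : Σ a b : V, Quiver.Path a b)) with hS
    have hclosed : IsPathClosed {x | x ∈ I ∨ x ∉ S} := by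
      constructor
      · rintro a c d p q (hp | hp)
        · exact Or.inl (hI a c d p q hp)
        · refine Or.inr fun hs => ?_
          obtain ⟨n, hn⟩ := hs
          obtain ⟨m, hm⟩ := seg_prefix vtx e q p n hn.symm
          exact hp ⟨m, hm.symm⟩
      · intro a c p hcons
        by_cases hmem : (⟨a, c, p⟩ : Σ a b : V, Quiver.Path a b) ∈ S
        · obtain ⟨n, hn⟩ := hmem
          obtain ⟨h1, h2, h3⟩ := sig_destr hn
          subst h1; subst h2
          have hp : infSeg vtx e n = p := eq_of_heq h3
          subst hp
          have := hcons (vtx (n + 1)) (e n)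
          rcases this with h | h
          · exact absurd h (hc (n + 1))
          · exact absurd ⟨n + 1, rfl⟩ h
        · exact Or.inr hmem
    have huniv := hD _ hclosed (fun x hx => Or.inl hx)
    have h0 : (⟨vtx 0, vtx 0, infSeg vtx e 0⟩ : Σ a b : V, Quiver.Path a b)
        ∈ {x | x ∈ I ∨ x ∉ S} := by rw [huniv]; trivial
    rcases h0 with h | h
    · exact hc 0 h
    · exact h ⟨0, rfl⟩
  · intro H C hC hIC
    ext x
    simp only [Set.mem_univ, iff_true]
    obtain ⟨a, c, p⟩ := x
    by_contra hp
    have key : ∀ x : {y : Σ' (w : V), Quiver.Path c w //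
        (⟨a, y.1, p.comp y.2⟩ : Σ a b : V, Quiver.Path a b) ∉ C},
        ∃ (z : V) (g : x.1.1 ⟶ z),
          (⟨a, z, p.comp (x.1.2.cons g)⟩ : Σ a b : V, Quiver.Path a b) ∉ C := by
      rintro ⟨⟨w, q⟩, hq⟩
      by_contra hall
      push_neg at hall
      refine hq (hC.2 a w (p.comp q) fun z g => ?_)
      have := hall z g
      rwa [Quiver.Path.comp_cons] at this
    choose z g hzg using key
    let K := {y : Σ' (w : V), Quiver.Path c w //
        (⟨a, y.1, p.comp y.2⟩ : Σ a b : V, Quiver.Path a b) ∉ C}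
    let nxt : K → K := fun x => ⟨⟨z x, x.1.2.cons (g x)⟩, hzg x⟩
    let x0 : K := ⟨⟨c, Quiver.Path.nil⟩, by
      have : p.comp Quiver.Path.nil = p := Quiver.Path.comp_nil p
      rw [this]; exact hp⟩
    let st : ℕ → K := fun n => Nat.rec x0 (fun _ s => nxt s) n
    let vtx : ℕ → V := fun n => (st n).1.1
    let e : ∀ i : ℕ, vtx i ⟶ vtx (i + 1) := fun i => g (st i)
    have hseg : ∀ n, infSeg vtx e n = (st n).1.2 := by
      intro n
      induction n with
      | zero => rfl
      | succ n ih =>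
        show (infSeg vtx e n).cons (e n) = ((st n).1.2).cons (g (st n))
        rw [ih]
    have hnotC : ∀ n,
        (⟨a, vtx n, p.comp (infSeg vtx e n)⟩ : Σ a b : V, Quiver.Path a b) ∉ C := by
      intro n
      rw [hseg n]
      exact (st n).2
    obtain ⟨vtx', e', hpre, htail⟩ := extend_lemma p vtx e rfl
    obtain ⟨n, hn⟩ := H vtx' e'
    rcases Nat.lt_or_ge n (p.length + 1) with hlt | hge
    · obtain ⟨b0, q0, r0, hq0, hs0⟩ := hpre n (Nat.lt_succ_iff.mp hlt)
      rw [hs0] at hn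
      have : (⟨a, c, q0.comp r0⟩ : Σ a b : V, Quiver.Path a b) ∈ I := hI a b0 c q0 r0 hn
      rw [← hq0] at this
      exact hp (hIC this)
    · obtain ⟨r, hr1, hr2⟩ := htail (n - p.length)
      have hr : r = infSeg vtx e (n - p.length) := by
        obtain ⟨-, -, h3⟩ := sig_destr hr1
        exact eq_of_heq h3
      have hidx : n = p.length + (n - p.length) := by omega
      rw [seg_congr vtx' e' hidx, hr2, hr] at hn
      exact hnotC (n - p.length) (hIC hn)
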